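/- arXiv:2310.12545 — 3 statements merged into one kernel-verified Lean document; each statement's English description precedes it below -/
import Mathlib

section
/- Let α ∈ [1/2, 1), β ∈ [0, 1/2), t ∈ [0,T). Then (∫_t^T [(s-t)^{-(1-α)}(T-s)^{-(1-α)} B(1-α,1-α)]^{1+β} ds)^{1/(1+β)} ≤ 16 (T-t)^{2(α-1)+1/(1+β)} B(1-α,1-α). -/
open MeasureTheory

lemma aux_shift_int (a b p : ℝ) (hp : -1 < p) :
    ∫ s in a..b, (s - a) ^ p = (b - a) ^ (p + 1) / (p + 1) := by
  rw [intervalIntegral.integral_comp_sub_right (fun u => u ^ p) a, sub_self,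
    integral_rpow (Or.inl hp), Real.zero_rpow (by linarith), sub_zero]

lemma aux_shift_int' (a b p : ℝ) (hp : -1 < p) :
    ∫ s in a..b, (b - s) ^ p = (b - a) ^ (p + 1) / (p + 1) := by
  rw [intervalIntegral.integral_comp_sub_left (fun u => u ^ p) b, sub_self,
    integral_rpow (Or.inl hp), Real.zero_rpow (by linarith), sub_zero]

lemma aux_shift_ii (a b p : ℝ) (hp : -1 < p) :
    IntervalIntegrable (fun s => (s - a) ^ p) volume a b := by
  have h := (intervalIntegral.intervalIntegrable_rpow' hp (a := a - a) (b := b - a)).comp_sub_right a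
  simpa using h

lemma aux_shift_ii' (a b p : ℝ) (hp : -1 < p) :
    IntervalIntegrable (fun s => (b - s) ^ p) volume a b := by
  have h := (intervalIntegral.intervalIntegrable_rpow' hp (a := b - b) (b := b - a)).comp_sub_left b
  simpa using h.symm

/-- For `α ∈ [1/2,1)`, `β ∈ [0,1/2)` and `t ∈ [0,T)`:
`(∫_t^T [(s-t)^{-(1-α)}(T-s)^{-(1-α)} B(1-α,1-α)]^{1+β} ds)^{1/(1+β)}
  ≤ 16 (T-t)^{2(α-1)+1/(1+β)} B(1-α,1-α)`,
where `B(a,b) = Γ(a)Γ(b)/Γ(a+b)`. -/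
theorem beta_integral_power_est (T : ℝ) (hT : 0 < T) (t : ℝ) (ht : t ∈ Set.Ico (0 : ℝ) T)
    (α β : ℝ) (hα : α ∈ Set.Ico (1 / 2 : ℝ) 1) (hβ : β ∈ Set.Ico (0 : ℝ) (1 / 2)) :
    (∫ s in t..T,
        ((s - t) ^ (-(1 - α)) * (T - s) ^ (-(1 - α)) *
            (Real.Gamma (1 - α) * Real.Gamma (1 - α) / Real.Gamma (2 - 2 * α))) ^ (1 + β))
          ^ (1 / (1 + β))
      ≤ 16 * (T - t) ^ (2 * (α - 1) + 1 / (1 + β)) *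
          (Real.Gamma (1 - α) * Real.Gamma (1 - α) / Real.Gamma (2 - 2 * α)) := by
  obtain ⟨ht0, htT⟩ := ht
  obtain ⟨hα1, hα2⟩ := hα
  obtain ⟨hβ1, hβ2⟩ := hβ
  set C := Real.Gamma (1 - α) * Real.Gamma (1 - α) / Real.Gamma (2 - 2 * α) with hCdef
  have hCpos : 0 < C :=
    div_pos (mul_pos (Real.Gamma_pos_of_pos (by linarith)) (Real.Gamma_pos_of_pos (by linarith)))
      (Real.Gamma_pos_of_pos (by linarith))
  have hβpos : (0 : ℝ) < 1 + β := by linarith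
  set p := (α - 1) * (1 + β) with hpdef
  have hp_neg : p < 0 := mul_neg_of_neg_of_pos (by linarith) hβpos
  have hp_lb : -3 / 4 < p := by
    nlinarith [mul_nonneg (by linarith : (0:ℝ) ≤ α - 1 + 1/2) hβpos.le]
  have hp1 : (0 : ℝ) < p + 1 := by linarith
  set L := T - t with hLdef
  have hLpos : 0 < L := by linarith
  set m := t + L / 2 with hmdef
  have htm : t ≤ m := by simp [hmdef]; linarith
  have hmT : m ≤ T := by simp [hmdef, hLdef]; linarith
  set f : ℝ → ℝ := fun s => (s - t) ^ p * (T - s) ^ p with hfdef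
  -- rewrite the integrand
  have hcong : Set.EqOn
      (fun s => ((s - t) ^ (-(1 - α)) * (T - s) ^ (-(1 - α)) * C) ^ (1 + β))
      (fun s => f s * C ^ (1 + β)) (Set.uIcc t T) := by
    intro s hs
    rw [Set.uIcc_of_le htT.le] at hs
    have h1 : 0 ≤ s - t := by linarith [hs.1]
    have h2 : 0 ≤ T - s := by linarith [hs.2]
    have hpe : -(1 - α) * (1 + β) = p := by rw [hpdef]; ring
    simp only [hfdef]
    rw [Real.mul_rpow (mul_nonneg (Real.rpow_nonneg h1 _) (Real.rpow_nonneg h2 _)) hCpos.le,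
      Real.mul_rpow (Real.rpow_nonneg h1 _) (Real.rpow_nonneg h2 _),
      ← Real.rpow_mul h1, ← Real.rpow_mul h2, hpe]
  rw [intervalIntegral.integral_congr hcong, intervalIntegral.integral_mul_const]
  -- integrability of f on each half
  have hf_nonneg : ∀ s ∈ Set.Icc t T, 0 ≤ f s := fun s hs =>
    mul_nonneg (Real.rpow_nonneg (by linarith [hs.1]) _) (Real.rpow_nonneg (by linarith [hs.2]) _)
  have hf_meas : Measurable f := by rw [hfdef]; fun_prop
  have hii1 : IntervalIntegrable f volume t m := by
    apply IntervalIntegrable.mono_fun' ((aux_shift_ii t m p (by linarith)).mul_const ((L/2) ^ p))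
      hf_meas.aestronglyMeasurable
    rw [Set.uIoc_of_le htm]
    filter_upwards [ae_restrict_mem measurableSet_Ioc] with s hs
    have h1 : 0 ≤ s - t := by linarith [hs.1.le]
    have h2 : 0 < L / 2 := by linarith
    have h3 : L / 2 ≤ T - s := by
      have := hs.2; simp only [hmdef] at this; linarith
    have hb : (T - s) ^ p ≤ (L / 2) ^ p := Real.rpow_le_rpow_of_nonpos h2 h3 hp_neg.le
    have hthis : f s ≤ (s - t) ^ p * (L / 2) ^ p :=
      mul_le_mul_of_nonneg_left hb (Real.rpow_nonneg h1 _)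
    have hfs : (0:ℝ) ≤ f s :=
      mul_nonneg (Real.rpow_nonneg h1 _) (Real.rpow_nonneg (by linarith : (0:ℝ) ≤ T - s) _)
    calc ‖f s‖ = f s := Real.norm_of_nonneg hfs
      _ ≤ (s - t) ^ p * (L / 2) ^ p := hthis
  have hii2 : IntervalIntegrable f volume m T := by
    apply IntervalIntegrable.mono_fun' ((aux_shift_ii' m T p (by linarith)).mul_const ((L/2) ^ p))
      hf_meas.aestronglyMeasurable
    rw [Set.uIoc_of_le hmT]
    filter_upwards [ae_restrict_mem measurableSet_Ioc] with s hs
    have h2 : 0 < L / 2 := by linarith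
    have h3 : L / 2 ≤ s - t := by
      have := hs.1.le; simp only [hmdef] at this; linarith
    have h4 : 0 ≤ T - s := by linarith [hs.2]
    have hb : (s - t) ^ p ≤ (L / 2) ^ p := Real.rpow_le_rpow_of_nonpos h2 h3 hp_neg.le
    have hthis : f s ≤ (T - s) ^ p * (L / 2) ^ p :=
      (mul_le_mul_of_nonneg_right hb (Real.rpow_nonneg h4 _)).trans_eq (mul_comm _ _)
    have hfs : (0:ℝ) ≤ f s :=
      mul_nonneg (Real.rpow_nonneg (by linarith : (0:ℝ) ≤ s - t) _) (Real.rpow_nonneg h4 _)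
    calc ‖f s‖ = f s := Real.norm_of_nonneg hfs
      _ ≤ (T - s) ^ p * (L / 2) ^ p := hthis
  -- bound the integral J
  set J := ∫ s in t..T, f s with hJdef
  have hJ_nonneg : 0 ≤ J := intervalIntegral.integral_nonneg htT.le hf_nonneg
  have half_pos : (0:ℝ) < L / 2 := by linarith
  have hJ1 : ∫ s in t..m, f s ≤ (L / 2) ^ p * ((L / 2) ^ (p + 1) / (p + 1)) := by
    have hle : ∀ s ∈ Set.Icc t m, f s ≤ (L / 2) ^ p * (s - t) ^ p := by
      intro s hs
      have h1 : 0 ≤ s - t := by linarith [hs.1]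
      have h3 : L / 2 ≤ T - s := by
        have := hs.2; simp only [hmdef] at this; linarith
      have hb : (T - s) ^ p ≤ (L / 2) ^ p := Real.rpow_le_rpow_of_nonpos half_pos h3 hp_neg.le
      calc f s ≤ (s - t) ^ p * (L / 2) ^ p :=
            mul_le_mul_of_nonneg_left hb (Real.rpow_nonneg h1 _)
        _ = (L / 2) ^ p * (s - t) ^ p := mul_comm _ _
    calc ∫ s in t..m, f s ≤ ∫ s in t..m, (L / 2) ^ p * (s - t) ^ p :=
          intervalIntegral.integral_mono_on htm hii1
            ((aux_shift_ii t m p (by linarith)).const_mul _) hle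
      _ = (L / 2) ^ p * ((m - t) ^ (p + 1) / (p + 1)) := by
          rw [intervalIntegral.integral_const_mul, aux_shift_int t m p (by linarith)]
      _ = (L / 2) ^ p * ((L / 2) ^ (p + 1) / (p + 1)) := by
          congr 2; simp [hmdef]
  have hJ2 : ∫ s in m..T, f s ≤ (L / 2) ^ p * ((L / 2) ^ (p + 1) / (p + 1)) := by
    have hle : ∀ s ∈ Set.Icc m T, f s ≤ (L / 2) ^ p * (T - s) ^ p := by
      intro s hs
      have h4 : 0 ≤ T - s := by linarith [hs.2]
      have h3 : L / 2 ≤ s - t := by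
        have := hs.1; simp only [hmdef] at this; linarith
      have hb : (s - t) ^ p ≤ (L / 2) ^ p := Real.rpow_le_rpow_of_nonpos half_pos h3 hp_neg.le
      exact mul_le_mul_of_nonneg_right hb (Real.rpow_nonneg h4 _)
    calc ∫ s in m..T, f s ≤ ∫ s in m..T, (L / 2) ^ p * (T - s) ^ p :=
          intervalIntegral.integral_mono_on hmT hii2
            ((aux_shift_ii' m T p (by linarith)).const_mul _) hle
      _ = (L / 2) ^ p * ((T - m) ^ (p + 1) / (p + 1)) := by
          rw [intervalIntegral.integral_const_mul, aux_shift_int' m T p (by linarith)]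
      _ = (L / 2) ^ p * ((L / 2) ^ (p + 1) / (p + 1)) := by
          congr 2; simp [hmdef, hLdef]; ring
  set K := (2 : ℝ) ^ (-(2 * p)) / (p + 1) with hKdef
  have hKL : 2 * ((L / 2) ^ p * ((L / 2) ^ (p + 1) / (p + 1))) = K * L ^ (2 * p + 1) := by
    have h1 : (L / 2) ^ p * (L / 2) ^ (p + 1) = (L / 2) ^ (2 * p + 1) := by
      rw [← Real.rpow_add half_pos]; ring_nf
    have h2 : (L / 2) ^ (2 * p + 1) = L ^ (2 * p + 1) * ((2:ℝ) ^ (2 * p + 1))⁻¹ := by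
      rw [Real.div_rpow hLpos.le (by norm_num), div_eq_mul_inv]
    have h3 : (2:ℝ) ^ (-(2 * p)) = 2 * ((2:ℝ) ^ (2 * p + 1))⁻¹ := by
      rw [← Real.rpow_neg (by norm_num), show -(2*p) = 1 + -(2*p+1) by ring,
        Real.rpow_add (by norm_num), Real.rpow_one]
    calc 2 * ((L / 2) ^ p * ((L / 2) ^ (p + 1) / (p + 1)))
        = 2 * ((L / 2) ^ p * (L / 2) ^ (p + 1)) / (p + 1) := by ring
      _ = 2 * (L ^ (2 * p + 1) * ((2:ℝ) ^ (2 * p + 1))⁻¹) / (p + 1) := by rw [h1, h2]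
      _ = K * L ^ (2 * p + 1) := by rw [hKdef, h3]; ring
  have hJK : J ≤ K * L ^ (2 * p + 1) := by
    rw [hJdef, ← intervalIntegral.integral_add_adjacent_intervals hii1 hii2, ← hKL]
    linarith
  have hK1 : 1 ≤ K := by
    rw [hKdef, le_div_iff₀ hp1]
    have : (1:ℝ) ≤ (2:ℝ) ^ (-(2 * p)) := Real.one_le_rpow (by norm_num) (by linarith)
    linarith
  have hK16 : K ≤ 16 := by
    rw [hKdef, div_le_iff₀ hp1]
    have h4 : (2:ℝ) ^ (-(2 * p)) ≤ (2:ℝ) ^ (2:ℝ) :=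
      Real.rpow_le_rpow_of_exponent_le (by norm_num) (by linarith)
    have h5 : (2:ℝ) ^ (2:ℝ) = 4 := by
      rw [show (2:ℝ) = ((2:ℕ):ℝ) by norm_num, Real.rpow_natCast]; norm_num
    nlinarith
  -- put it all together
  have he1 : 1 / (1 + β) ≤ 1 := by rw [div_le_one hβpos]; linarith
  have he0 : 0 ≤ 1 / (1 + β) := by positivity
  have hCrw : (J * C ^ (1 + β)) ^ (1 / (1 + β)) = J ^ (1 / (1 + β)) * C := by
    rw [Real.mul_rpow hJ_nonneg (Real.rpow_nonneg hCpos.le _), ← Real.rpow_mul hCpos.le,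
      mul_one_div_cancel hβpos.ne', Real.rpow_one]
  rw [hCrw]
  have hexp : (2 * p + 1) * (1 / (1 + β)) = 2 * (α - 1) + 1 / (1 + β) := by
    rw [hpdef]; field_simp
  have hmain : J ^ (1 / (1 + β)) ≤ 16 * L ^ (2 * (α - 1) + 1 / (1 + β)) := by
    calc J ^ (1 / (1 + β)) ≤ (K * L ^ (2 * p + 1)) ^ (1 / (1 + β)) :=
          Real.rpow_le_rpow hJ_nonneg hJK he0
      _ = K ^ (1 / (1 + β)) * L ^ ((2 * p + 1) * (1 / (1 + β))) := by
          rw [Real.mul_rpow (by positivity) (Real.rpow_nonneg hLpos.le _),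
            ← Real.rpow_mul hLpos.le]
      _ ≤ 16 * L ^ (2 * (α - 1) + 1 / (1 + β)) := by
          rw [hexp]
          apply mul_le_mul_of_nonneg_right _ (Real.rpow_nonneg hLpos.le _)
          calc K ^ (1 / (1 + β)) ≤ K ^ (1:ℝ) :=
                Real.rpow_le_rpow_of_exponent_le hK1 he1
            _ = K := Real.rpow_one K
            _ ≤ 16 := hK16
  calc J ^ (1 / (1 + β)) * C ≤ 16 * L ^ (2 * (α - 1) + 1 / (1 + β)) * C :=
        mul_le_mul_of_nonneg_right hmain hCpos.le
    _ = 16 * (T - t) ^ (2 * (α - 1) + 1 / (1 + β)) * C := by rw [hLdef]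
end

section
/- Let β ∈ [0, 1/2) and t ∈ [0,T). Then (∫_t^T [(s-t)^{-1/2}(T-s)^{-1/2}]^{1+β} ds)^{1/(1+β)} ≤ 4 (T-t)^{-β/(1+β)}. -/
/-!
With `q = (1 + β) / 2` the integrand is `(s - t) ^ (-q) * (T - s) ^ (-q)`. Subadditivity of
`x ↦ x ^ q` (for `q ≤ 1`), applied to `(s - t) + (T - s) = T - t`, bounds it by
`(T - t) ^ (-q) * ((s - t) ^ (-q) + (T - s) ^ (-q))`, which separates the two endpoint
singularities; both are integrable since `q < 1`, and the integral is at most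
`4 / (1 - β) * (T - t) ^ (-β)`. Bernoulli's inequality `4 ^ (-β) ≤ 1 - β` turns the constant
into `4 ^ (1 + β)`, and taking the `1 / (1 + β)`-th power finishes.
-/

open MeasureTheory Set

lemma rpow_neg_mul_rpow_neg_le {x y q : ℝ} (hx : 0 < x) (hy : 0 < y) (hq0 : 0 ≤ q)
    (hq1 : q ≤ 1) : x ^ (-q) * y ^ (-q) ≤ (x + y) ^ (-q) * (x ^ (-q) + y ^ (-q)) := by
  have ha : 0 < x ^ q := Real.rpow_pos_of_pos hx q
  have hb : 0 < y ^ q := Real.rpow_pos_of_pos hy q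
  have hc : 0 < (x + y) ^ q := Real.rpow_pos_of_pos (add_pos hx hy) q
  rw [Real.rpow_neg hx.le, Real.rpow_neg hy.le, Real.rpow_neg (add_pos hx hy).le,
    inv_add_inv ha.ne' hb.ne', ← mul_inv, inv_mul_eq_div, div_div]
  calc (x ^ q * y ^ q)⁻¹ = (x + y) ^ q / (x ^ q * y ^ q * (x + y) ^ q) := by field_simp
    _ ≤ (x ^ q + y ^ q) / (x ^ q * y ^ q * (x + y) ^ q) := by
      gcongr
      exact Real.rpow_add_le_add_rpow hx.le hy.le hq0 hq1

lemma integral_rpow_neg_comp_sub_right {q : ℝ} (hq : q < 1) (t T : ℝ) :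
    ∫ s in t..T, (s - t) ^ (-q) = (T - t) ^ (1 - q) / (1 - q) := by
  rw [intervalIntegral.integral_comp_sub_right (· ^ (-q)), sub_self,
    integral_rpow (Or.inl (by linarith)), Real.zero_rpow (by linarith), sub_zero, neg_add_eq_sub]

lemma integral_rpow_neg_comp_sub_left {q : ℝ} (hq : q < 1) (t T : ℝ) :
    ∫ s in t..T, (T - s) ^ (-q) = (T - t) ^ (1 - q) / (1 - q) := by
  rw [intervalIntegral.integral_comp_sub_left (· ^ (-q)), sub_self,
    integral_rpow (Or.inl (by linarith)), Real.zero_rpow (by linarith), sub_zero, neg_add_eq_sub]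

lemma integral_rpow_neg_mul_rpow_neg_le {t T q : ℝ} (htT : t < T) (hq0 : 0 ≤ q) (hq1 : q < 1) :
    ∫ s in t..T, (s - t) ^ (-q) * (T - s) ^ (-q) ≤ 2 / (1 - q) * (T - t) ^ (1 - 2 * q) := by
  have hrpow : ∀ a b : ℝ, IntervalIntegrable (· ^ (-q)) volume a b :=
    fun _ _ ↦ intervalIntegral.intervalIntegrable_rpow' (by linarith)
  have hleft : IntervalIntegrable (fun s ↦ (s - t) ^ (-q)) volume t T := by
    simpa using (hrpow 0 (T - t)).comp_sub_right t
  have hright : IntervalIntegrable (fun s ↦ (T - s) ^ (-q)) volume t T := by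
    simpa using (hrpow (T - t) 0).comp_sub_left T
  have hdom := (hleft.add hright).const_mul ((T - t) ^ (-q))
  calc ∫ s in t..T, (s - t) ^ (-q) * (T - s) ^ (-q)
      ≤ ∫ s in t..T, (T - t) ^ (-q) * ((s - t) ^ (-q) + (T - s) ^ (-q)) := by
        simp only [intervalIntegral.integral_of_le htT.le, integral_Ioc_eq_integral_Ioo]
        refine setIntegral_mono_of_nonneg (fun s hs ↦ ?_) (fun s hs ↦ ?_)
          (hdom.1.mono_set Ioo_subset_Ioc_self)
        · have := hs.1; have := hs.2; positivity
        · simpa using rpow_neg_mul_rpow_neg_le (sub_pos.2 hs.1) (sub_pos.2 hs.2) hq0 hq1.le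
    _ = 2 / (1 - q) * (T - t) ^ (1 - 2 * q) := by
        rw [intervalIntegral.integral_const_mul, intervalIntegral.integral_add hleft hright,
          integral_rpow_neg_comp_sub_right hq1, integral_rpow_neg_comp_sub_left hq1]
        have hsplit : (T - t) ^ (1 - 2 * q) = (T - t) ^ (-q) * (T - t) ^ (1 - q) := by
          rw [← Real.rpow_add (sub_pos.2 htT)]; ring_nf
        rw [hsplit]; ring

lemma four_rpow_neg_le_one_sub {β : ℝ} (h0 : 0 ≤ β) (h1 : β ≤ 1 / 2) :
    (4 : ℝ) ^ (-β) ≤ 1 - β := by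
  have h4 : (4 : ℝ) ^ (-β) = (1 + -1 / 2) ^ (2 * β) := by
    rw [Real.rpow_mul (by norm_num), Real.rpow_neg (by norm_num), ← Real.inv_rpow (by norm_num)]
    norm_num
  rw [h4]
  linarith [rpow_one_add_le_one_add_mul_self (by norm_num : (-1 : ℝ) ≤ -1 / 2)
    (by linarith : 0 ≤ 2 * β) (by linarith)]

lemma four_div_one_sub_le_four_rpow {β : ℝ} (h0 : 0 ≤ β) (h1 : β ≤ 1 / 2) :
    4 / (1 - β) ≤ (4 : ℝ) ^ (1 + β) := by
  have h := four_rpow_neg_le_one_sub h0 h1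
  rw [Real.rpow_neg (by norm_num), inv_le_iff_one_le_mul₀ (by positivity)] at h
  rw [Real.rpow_add (by norm_num), Real.rpow_one, div_le_iff₀ (by linarith)]
  nlinarith

theorem sqrt_kernel_power_est_general (T : ℝ) (t : ℝ) (ht : t ∈ Set.Ico (0 : ℝ) T)
    (β : ℝ) (hβ : β ∈ Set.Ico (0 : ℝ) (1 / 2)) :
    (∫ s in t..T, ((s - t) ^ (-(1 : ℝ) / 2) * (T - s) ^ (-(1 : ℝ) / 2)) ^ (1 + β))
        ^ (1 / (1 + β))
      ≤ 4 * (T - t) ^ (-β / (1 + β)) := by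
  obtain ⟨-, htT⟩ := ht
  obtain ⟨hβ0, hβ1⟩ := hβ
  have hkernel : ∀ s ∈ uIcc t T,
      ((s - t) ^ (-(1 : ℝ) / 2) * (T - s) ^ (-(1 : ℝ) / 2)) ^ (1 + β)
        = (s - t) ^ (-((1 + β) / 2)) * (T - s) ^ (-((1 + β) / 2)) := by
    intro s hs
    rw [uIcc_of_le htT.le] at hs
    have hst : 0 ≤ s - t := sub_nonneg.2 hs.1
    have hTs : 0 ≤ T - s := sub_nonneg.2 hs.2
    rw [Real.mul_rpow (Real.rpow_nonneg hst _) (Real.rpow_nonneg hTs _),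
      ← Real.rpow_mul hst, ← Real.rpow_mul hTs]
    ring_nf
  have hbound := integral_rpow_neg_mul_rpow_neg_le htT (q := (1 + β) / 2) (by linarith)
    (by linarith)
  rw [← intervalIntegral.integral_congr hkernel,
    show 2 / (1 - (1 + β) / 2) = 4 / (1 - β) by field_simp; ring,
    show 1 - 2 * ((1 + β) / 2) = -β by ring] at hbound
  rw [one_div, Real.rpow_inv_le_iff_of_pos _ (by positivity) (by linarith),
    Real.mul_rpow (by norm_num) (by positivity), ← Real.rpow_mul (sub_pos.2 htT).le,
    div_mul_cancel₀ _ (by linarith)]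
  · calc _ ≤ 4 / (1 - β) * (T - t) ^ (-β) := hbound
      _ ≤ _ := by gcongr; exact four_div_one_sub_le_four_rpow hβ0 hβ1.le
  · refine intervalIntegral.integral_nonneg htT.le fun s hs ↦ ?_
    have := hs.1; have := hs.2
    positivity

/-- For `β ∈ [0,1/2)` and `t ∈ [0,T)`:
`(∫_t^T [(s-t)^{-1/2}(T-s)^{-1/2}]^{1+β} ds)^{1/(1+β)} ≤ 4 (T-t)^{-β/(1+β)}`. -/
theorem sqrt_kernel_power_est (T : ℝ) (hT : 0 < T) (t : ℝ) (ht : t ∈ Set.Ico (0 : ℝ) T)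
    (β : ℝ) (hβ : β ∈ Set.Ico (0 : ℝ) (1 / 2)) :
    (∫ s in t..T, ((s - t) ^ (-(1 : ℝ) / 2) * (T - s) ^ (-(1 : ℝ) / 2)) ^ (1 + β))
        ^ (1 / (1 + β))
      ≤ 4 * (T - t) ^ (-β / (1 + β)) :=
  sqrt_kernel_power_est_general T t ht β hβ
end

section
/- Suppose a sequence (C_n)_{n≥0} of nonnegative reals satisfies C_0 = 0 and, for all n ≥ 1, C_n ≤ M^n(M^M e + g)·1_{ℕ}(n) + Σ_{l=0}^{n-1} M^{n-l} (M^M e + f + C_l + C_{l-1}) (with C_{-1} := 0), where M ∈ ℕ, M ≥ 2 and e, f, g ≥ 0. Then C_n ≤ ((3 M^M e + g + f)/2) · (3M)^n for all n ∈ ℕ. -/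
lemma geom_tail_le (P : ℝ) (hP : 2 ≤ P) (k : ℕ) :
    ∑ i ∈ Finset.range k, P ^ (k - i) ≤ 2 * P ^ k - 2 := by
  induction k with
  | zero => simp
  | succ n ihk =>
    have hP0 : (0:ℝ) ≤ P := by linarith
    rw [Finset.sum_range_succ]
    have h1 : ∑ i ∈ Finset.range n, P ^ (n + 1 - i) =
        (∑ i ∈ Finset.range n, P ^ (n - i)) * P := by
      rw [Finset.sum_mul]
      refine Finset.sum_congr rfl fun i hi => ?_
      have hin : i < n := Finset.mem_range.mp hi
      have : n + 1 - i = (n - i) + 1 := by omega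
      rw [this, pow_succ]
    rw [h1]
    have h2 : (∑ i ∈ Finset.range n, P ^ (n - i)) * P ≤ (2 * P ^ n - 2) * P :=
      mul_le_mul_of_nonneg_right ihk hP0
    have h3 : P ^ (n + 1 - n) = P := by simp
    have hPn : (1:ℝ) ≤ P ^ n := one_le_pow₀ (by linarith : (1:ℝ) ≤ P)
    rw [h3]
    nlinarith [pow_succ P n]

/-- Complexity recursion for the multilevel Picard scheme: if `(C_n)` are nonnegative
reals with `C_0 = 0` and, for all `n ≥ 1`,
`C_n ≤ M^n (M^M e + g) + Σ_{l=0}^{n-1} M^{n-l}(M^M e + f + C_l + C_{l-1})`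
(with `C_{-1} := 0`), where `M ≥ 2` and `e, f, g ≥ 0`, then
`C_n ≤ ((3 M^M e + g + f)/2) (3M)^n` for all `n`. -/
theorem mlp_cost_recursion (M : ℕ) (hM : 2 ≤ M) (e f g : ℝ)
    (he : 0 ≤ e) (hf : 0 ≤ f) (hg : 0 ≤ g)
    (C : ℕ → ℝ) (hCnn : ∀ n, 0 ≤ C n) (hC0 : C 0 = 0)
    (hrec : ∀ n : ℕ, 1 ≤ n →
      C n ≤ (M : ℝ) ^ n * ((M : ℝ) ^ M * e + g) +
        ∑ l ∈ Finset.range n,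
          (M : ℝ) ^ (n - l) * ((M : ℝ) ^ M * e + f + C l + (if l = 0 then 0 else C (l - 1)))) :
    ∀ n : ℕ, C n ≤ ((3 * (M : ℝ) ^ M * e + g + f) / 2) * (3 * (M : ℝ)) ^ n := by
  have hP2 : (2:ℝ) ≤ (M:ℝ) := by exact_mod_cast hM
  have hP0 : (0:ℝ) < (M:ℝ) := by linarith
  set P : ℝ := (M:ℝ) with hP
  set E : ℝ := P ^ M * e with hE
  have hE0 : 0 ≤ E := by positivity
  set K : ℝ := (3 * P ^ M * e + g + f) / 2 with hKdef
  have hKE : K = (3 * E + g + f) / 2 := by rw [hKdef, hE]; ring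
  have hK0 : 0 ≤ K := by rw [hKE]; positivity
  intro n
  induction n using Nat.strong_induction_on with
  | _ n ih =>
  match n with
  | 0 => simpa [hC0] using hK0
  | 1 =>
    have h1 := hrec 1 le_rfl
    simp only [Finset.sum_range_one, hC0] at h1
    norm_num at h1
    rw [pow_one]
    nlinarith [mul_nonneg hP0.le hE0, mul_nonneg hP0.le hg, mul_nonneg hP0.le hf]
  | (m+2) =>
    have hrecn := hrec (m+2) (by omega)
    rw [Finset.sum_range_succ', Finset.sum_range_succ'] at hrecn
    norm_num [hC0] at hrecn
    have hC1 : C 1 ≤ K * (3 * P) := by simpa using ih 1 (by omega)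
    have hEf0 : (0:ℝ) ≤ E + f := by linarith
    -- termwise bound on the tail sum
    have hterm : ∀ x ∈ Finset.range m,
        P ^ (m + 2 - (x + 1 + 1)) * (E + f + C (x + 1 + 1) + C (x + 1)) ≤
          P ^ (m - x) * (E + f) + 2 * K * 3 ^ (x + 2) * P ^ (m + 2) := by
      intro x hx
      have hxm : x < m := Finset.mem_range.mp hx
      have hsub : m + 2 - (x + 1 + 1) = m - x := by omega
      rw [hsub]
      have h2 : C (x + 1 + 1) ≤ K * (3 * P) ^ (x + 2) := ih (x + 2) (by omega)
      have h3 : C (x + 1) ≤ K * (3 * P) ^ (x + 2) := by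
        refine (ih (x + 1) (by omega)).trans ?_
        have hmono : (3 * P) ^ (x + 1) ≤ (3 * P) ^ (x + 2) :=
          pow_le_pow_right₀ (by linarith) (by omega)
        exact mul_le_mul_of_nonneg_left hmono hK0
      have hpow : P ^ (m - x) * (3 * P) ^ (x + 2) = 3 ^ (x + 2) * P ^ (m + 2) := by
        have hexp : (m - x) + (x + 2) = m + 2 := by omega
        rw [mul_pow, mul_left_comm, ← pow_add, hexp]
      have hPmx : (0:ℝ) ≤ P ^ (m - x) := by positivity
      calc P ^ (m - x) * (E + f + C (x + 1 + 1) + C (x + 1))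
          ≤ P ^ (m - x) * (E + f + K * (3*P) ^ (x+2) + K * (3*P) ^ (x+2)) := by
            apply mul_le_mul_of_nonneg_left (by linarith) hPmx
        _ = P ^ (m - x) * (E + f) + 2 * K * (P ^ (m - x) * (3*P) ^ (x+2)) := by ring
        _ = P ^ (m - x) * (E + f) + 2 * K * 3 ^ (x + 2) * P ^ (m + 2) := by rw [hpow]; ring
    have hsum1 := Finset.sum_le_sum hterm
    rw [Finset.sum_add_distrib] at hsum1
    have hsA : ∑ x ∈ Finset.range m, P ^ (m - x) * (E + f) ≤ (2 * P ^ m - 2) * (E + f) := by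
      rw [← Finset.sum_mul]
      exact mul_le_mul_of_nonneg_right (geom_tail_le P hP2 m) hEf0
    have hsB : ∑ x ∈ Finset.range m, 2 * K * 3 ^ (x + 2) * P ^ (m + 2)
        = 9 * (3:ℝ) ^ m * K * P ^ (m + 2) - 9 * K * P ^ (m + 2) := by
      have h3s : ∑ x ∈ Finset.range m, (3:ℝ) ^ x = ((3:ℝ) ^ m - 1) / 2 := by
        rw [geom_sum_eq (by norm_num) m]; norm_num
      calc ∑ x ∈ Finset.range m, 2 * K * 3 ^ (x + 2) * P ^ (m + 2)
          = (∑ x ∈ Finset.range m, (3:ℝ) ^ x) * (18 * K * P ^ (m + 2)) := by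
            rw [Finset.sum_mul]
            refine Finset.sum_congr rfl fun x _ => ?_
            rw [pow_add]; ring
        _ = 9 * (3:ℝ) ^ m * K * P ^ (m + 2) - 9 * K * P ^ (m + 2) := by rw [h3s]; ring
    have hq : 2 * P ^ m - 2 + P ^ (m + 1) ≤ P ^ (m + 2) := by
      have h1 : P ^ (m + 1) = P ^ m * P := pow_succ P m
      have h2 : P ^ (m + 2) = P ^ m * P * P := by rw [pow_succ, pow_succ]
      nlinarith [pow_pos hP0 m, mul_nonneg (pow_pos hP0 m).le
        (mul_nonneg (by linarith : (0:ℝ) ≤ P - 2) (by linarith : (0:ℝ) ≤ P + 1))]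
    have hq2 : (2 * P ^ m - 2) * (E + f) + P ^ (m + 1) * (E + f) ≤ P ^ (m + 2) * (E + f) := by
      nlinarith [mul_le_mul_of_nonneg_right hq hEf0]
    have hC1' : P ^ (m + 1) * (E + f + C 1) ≤ P ^ (m + 1) * (E + f) + 3 * K * P ^ (m + 2) := by
      have h1 : P ^ (m + 1) * C 1 ≤ P ^ (m + 1) * (K * (3 * P)) :=
        mul_le_mul_of_nonneg_left hC1 (by positivity)
      have h2 : P ^ (m + 1) * (K * (3 * P)) = 3 * K * P ^ (m + 2) := by
        rw [pow_succ]; ring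
      have h3 : P ^ (m + 1) * (E + f + C 1) = P ^ (m + 1) * (E + f) + P ^ (m + 1) * C 1 := by ring
      linarith
    have hfinal : K * (3 * P) ^ (m + 2) = 9 * (3:ℝ) ^ m * K * P ^ (m + 2) := by
      rw [mul_pow, pow_add]; norm_num; ring
    have h6 : 0 ≤ 6 * K - (3 * E + g + 2 * f) := by rw [hKE]; linarith
    have hlast := mul_nonneg h6 (pow_pos hP0 (m + 2)).le
    rw [hfinal]
    linarith [hrecn, hsum1, hsA, hsB, hq2, hC1', hlast]
end
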